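/- arXiv:1801.10013 — 2 statements merged into one kernel-verified Lean document; each statement's English description precedes it below -/
import Mathlib

section
/- Let c ∈ ℝ be a constant and let A : (0,∞) × (0,∞) → ℝ be a C² function satisfying t·p·A_{pp} − 2t²·A_{pt} + 2c² = 0 for all p, t > 0. Define G(p,y,t) = A(p,t) + p·(−y²/(4t) + c·y/t). Then G satisfies the G-equation G_{yp}² − G_{yy} G_{pp} − G_{pt} = 0 for all p ∈ (0,∞), y ∈ ℝ, t ∈ (0,∞). -/
/-- Partial derivative of `f : ℝ³ → ℝ` in direction `v`, as a function. -/
noncomputable def pd (v : ℝ × ℝ × ℝ) (f : ℝ × ℝ × ℝ → ℝ) : ℝ × ℝ × ℝ → ℝ :=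
  fun q => fderiv ℝ f q v

/-- ∂/∂p for functions `G(p,y,t)`. -/
noncomputable def px : (ℝ × ℝ × ℝ → ℝ) → ℝ × ℝ × ℝ → ℝ := pd (1, 0, 0)
/-- ∂/∂y. -/
noncomputable def py : (ℝ × ℝ × ℝ → ℝ) → ℝ × ℝ × ℝ → ℝ := pd (0, 1, 0)
/-- ∂/∂t. -/
noncomputable def pt : (ℝ × ℝ × ℝ → ℝ) → ℝ × ℝ × ℝ → ℝ := pd (0, 0, 1)

/-- Partial derivative of `f : ℝ² → ℝ` in direction `v`, as a function. -/
noncomputable def pd2 (v : ℝ × ℝ) (f : ℝ × ℝ → ℝ) : ℝ × ℝ → ℝ :=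
  fun z => fderiv ℝ f z v

/-- Derivative in the first coordinate (i.e. `p` for `A(p,t)`). -/
noncomputable def p1 : (ℝ × ℝ → ℝ) → ℝ × ℝ → ℝ := pd2 (1, 0)
/-- Derivative in the second coordinate (i.e. `t`). -/
noncomputable def p2 : (ℝ × ℝ → ℝ) → ℝ × ℝ → ℝ := pd2 (0, 1)

/-! On the open set `p, t > 0` one has `G_y = p (c - y/2) / t` and
`G_p = A_p(p,t) - y²/(4t) + c y/t`. Differentiating these identities once more gives
`G_{yp} = (c - y/2)/t`, `G_{yy} = -p/(2t)`, `G_{pp} = A_{pp}` and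
`G_{pt} = A_{pt} + (y²/4 - c y)/t²`, so that
`G_{yp}² - G_{yy} G_{pp} - G_{pt} = (t p A_{pp} - 2 t² A_{pt} + 2 c²) / (2 t²)`. -/

open Filter Topology Set

section CoordinateDerivatives

variable {p y t : ℝ}

theorem hasDerivAt_px {f : ℝ × ℝ × ℝ → ℝ} (hf : DifferentiableAt ℝ f (p, y, t)) :
    HasDerivAt (fun s => f (s, y, t)) (px f (p, y, t)) p :=
  hf.hasFDerivAt.comp_hasDerivAt p ((hasDerivAt_id p).prodMk (hasDerivAt_const p (y, t)))

theorem hasDerivAt_py {f : ℝ × ℝ × ℝ → ℝ} (hf : DifferentiableAt ℝ f (p, y, t)) :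
    HasDerivAt (fun s => f (p, s, t)) (py f (p, y, t)) y :=
  hf.hasFDerivAt.comp_hasDerivAt y
    ((hasDerivAt_const y p).prodMk ((hasDerivAt_id y).prodMk (hasDerivAt_const y t)))

theorem hasDerivAt_pt {f : ℝ × ℝ × ℝ → ℝ} (hf : DifferentiableAt ℝ f (p, y, t)) :
    HasDerivAt (fun s => f (p, y, s)) (pt f (p, y, t)) t :=
  hf.hasFDerivAt.comp_hasDerivAt t
    ((hasDerivAt_const t p).prodMk ((hasDerivAt_const t y).prodMk (hasDerivAt_id t)))

theorem hasDerivAt_p1 {g : ℝ × ℝ → ℝ} (hg : DifferentiableAt ℝ g (p, t)) :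
    HasDerivAt (fun s => g (s, t)) (p1 g (p, t)) p :=
  hg.hasFDerivAt.comp_hasDerivAt p ((hasDerivAt_id p).prodMk (hasDerivAt_const p t))

theorem hasDerivAt_p2 {g : ℝ × ℝ → ℝ} (hg : DifferentiableAt ℝ g (p, t)) :
    HasDerivAt (fun s => g (p, s)) (p2 g (p, t)) t :=
  hg.hasFDerivAt.comp_hasDerivAt t ((hasDerivAt_const t p).prodMk (hasDerivAt_id t))

theorem pd_congr_of_eventuallyEq {f g : ℝ × ℝ × ℝ → ℝ} {q : ℝ × ℝ × ℝ} (h : f =ᶠ[𝓝 q] g)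
    (v : ℝ × ℝ × ℝ) : pd v f q = pd v g q := by
  simp only [pd, h.fderiv_eq]

theorem differentiableAt_pd2 {g : ℝ × ℝ → ℝ} {z : ℝ × ℝ} (hg : ContDiffAt ℝ 2 g z)
    (v : ℝ × ℝ) : DifferentiableAt ℝ (pd2 v g) z :=
  ((hg.fderiv_right (m := 1) le_rfl).differentiableAt one_ne_zero).clm_apply
    (differentiableAt_const v)

theorem differentiableAt_comp_fst_snd_snd {g : ℝ × ℝ → ℝ} (hg : DifferentiableAt ℝ g (p, t)) :
    DifferentiableAt ℝ (fun r : ℝ × ℝ × ℝ => g (r.1, r.2.2)) (p, y, t) :=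
  hg.comp (p, y, t) (by fun_prop)

theorem eventually_pos_fst_pos_snd_snd (hp : 0 < p) (ht : 0 < t) :
    ∀ᶠ r : ℝ × ℝ × ℝ in 𝓝 (p, y, t), 0 < r.1 ∧ 0 < r.2.2 :=
  ((continuous_fst.tendsto _).eventually (lt_mem_nhds hp)).and
    (((continuous_snd.comp continuous_snd).tendsto _).eventually (lt_mem_nhds ht))

end CoordinateDerivatives

noncomputable def classCSolution (c : ℝ) (A : ℝ × ℝ → ℝ) : ℝ × ℝ × ℝ → ℝ := fun r =>
  A (r.1, r.2.2) + r.1 * (-(r.2.1 ^ 2) / (4 * r.2.2) + c * r.2.1 / r.2.2)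

namespace classCSolution

variable {c : ℝ} {A : ℝ × ℝ → ℝ} {p y t : ℝ}

theorem differentiableAt (hA : DifferentiableAt ℝ A (p, t)) (ht : t ≠ 0) :
    DifferentiableAt ℝ (classCSolution c A) (p, y, t) := by
  have hA' := differentiableAt_comp_fst_snd_snd (y := y) hA
  unfold classCSolution
  fun_prop (disch := simpa using ht)

theorem py_eq (hA : DifferentiableAt ℝ A (p, t)) (ht : t ≠ 0) :
    py (classCSolution c A) (p, y, t) = p * (c - y / 2) / t := by
  refine (hasDerivAt_py (differentiableAt hA ht)).unique ?_
  have h := ((((hasDerivAt_pow 2 y).neg.div_const (4 * t)).add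
    (((hasDerivAt_id y).const_mul c).div_const t)).const_mul p).const_add (A (p, t))
  exact h.congr_deriv (by field_simp; ring)

theorem px_eq (hA : DifferentiableAt ℝ A (p, t)) (ht : t ≠ 0) :
    px (classCSolution c A) (p, y, t) = p1 A (p, t) + (-(y ^ 2) / (4 * t) + c * y / t) := by
  refine (hasDerivAt_px (differentiableAt hA ht)).unique ?_
  exact ((hasDerivAt_p1 hA).add
    ((hasDerivAt_id p).mul_const (-(y ^ 2) / (4 * t) + c * y / t))).congr_deriv (by simp)

theorem py_eventuallyEq (hA : DifferentiableOn ℝ A (Ioi 0 ×ˢ Ioi 0)) (hp : 0 < p)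
    (ht : 0 < t) : py (classCSolution c A) =ᶠ[𝓝 (p, y, t)]
      fun r => r.1 * (c - r.2.1 / 2) / r.2.2 := by
  filter_upwards [eventually_pos_fst_pos_snd_snd hp ht] with r hr
  exact py_eq (hA.differentiableAt (prod_mem_nhds (Ioi_mem_nhds hr.1) (Ioi_mem_nhds hr.2)))
    hr.2.ne'

theorem px_eventuallyEq (hA : DifferentiableOn ℝ A (Ioi 0 ×ˢ Ioi 0)) (hp : 0 < p)
    (ht : 0 < t) : px (classCSolution c A) =ᶠ[𝓝 (p, y, t)]
      fun r => p1 A (r.1, r.2.2) + (-(r.2.1 ^ 2) / (4 * r.2.2) + c * r.2.1 / r.2.2) := by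
  filter_upwards [eventually_pos_fst_pos_snd_snd hp ht] with r hr
  exact px_eq (hA.differentiableAt (prod_mem_nhds (Ioi_mem_nhds hr.1) (Ioi_mem_nhds hr.2)))
    hr.2.ne'

theorem px_py_eq (hA : DifferentiableOn ℝ A (Ioi 0 ×ˢ Ioi 0)) (hp : 0 < p) (ht : 0 < t) :
    px (py (classCSolution c A)) (p, y, t) = (c - y / 2) / t := by
  refine (pd_congr_of_eventuallyEq (py_eventuallyEq hA hp ht) _).trans
    ((hasDerivAt_px (by fun_prop (disch := simpa using ht.ne'))).unique ?_)
  exact (((hasDerivAt_id p).mul_const (c - y / 2)).div_const t).congr_deriv (by simp)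

theorem py_py_eq (hA : DifferentiableOn ℝ A (Ioi 0 ×ˢ Ioi 0)) (hp : 0 < p) (ht : 0 < t) :
    py (py (classCSolution c A)) (p, y, t) = -p / (2 * t) := by
  refine (pd_congr_of_eventuallyEq (py_eventuallyEq hA hp ht) _).trans
    ((hasDerivAt_py (by fun_prop (disch := simpa using ht.ne'))).unique ?_)
  exact ((((hasDerivAt_id y).div_const 2).const_sub c).const_mul p |>.div_const t).congr_deriv
    (by field_simp)

theorem px_px_eq (hA : ContDiffOn ℝ 2 A (Ioi 0 ×ˢ Ioi 0)) (hp : 0 < p) (ht : 0 < t) :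
    px (px (classCSolution c A)) (p, y, t) = p1 (p1 A) (p, t) := by
  have hA1 : DifferentiableAt ℝ (p1 A) (p, t) :=
    differentiableAt_pd2 (hA.contDiffAt (prod_mem_nhds (Ioi_mem_nhds hp) (Ioi_mem_nhds ht))) _
  have hA1' := differentiableAt_comp_fst_snd_snd (y := y) hA1
  refine (pd_congr_of_eventuallyEq (px_eventuallyEq (hA.differentiableOn two_ne_zero) hp ht)
    _).trans ((hasDerivAt_px (by fun_prop (disch := simpa using ht.ne'))).unique ?_)
  exact (hasDerivAt_p1 hA1).add_const (-(y ^ 2) / (4 * t) + c * y / t)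

theorem pt_px_eq (hA : ContDiffOn ℝ 2 A (Ioi 0 ×ˢ Ioi 0)) (hp : 0 < p) (ht : 0 < t) :
    pt (px (classCSolution c A)) (p, y, t) = p2 (p1 A) (p, t) + (y ^ 2 / 4 - c * y) / t ^ 2 := by
  have hA1 : DifferentiableAt ℝ (p1 A) (p, t) :=
    differentiableAt_pd2 (hA.contDiffAt (prod_mem_nhds (Ioi_mem_nhds hp) (Ioi_mem_nhds ht))) _
  have hA1' := differentiableAt_comp_fst_snd_snd (y := y) hA1
  refine (pd_congr_of_eventuallyEq (px_eventuallyEq (hA.differentiableOn two_ne_zero) hp ht)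
    _).trans ((hasDerivAt_pt (by fun_prop (disch := simpa using ht.ne'))).unique ?_)
  have h4t : 4 * t ≠ 0 := by positivity
  exact ((hasDerivAt_p2 hA1).add
    (((hasDerivAt_const t (-(y ^ 2))).div ((hasDerivAt_id' t).const_mul 4) h4t).add
      ((hasDerivAt_const t (c * y)).div (hasDerivAt_id' t) ht.ne'))).congr_deriv
    (by field_simp; ring)

end classCSolution

/-- Verification of the Class C solutions: if `A(p,t)` is C² on `(0,∞) × (0,∞)` and
satisfies `t p A_{pp} - 2t² A_{pt} + 2c² = 0` there, then
`G(p,y,t) = A(p,t) + p(-y²/(4t) + c y/t)` satisfies the G-equation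
`G_{yp}² - G_{yy} G_{pp} - G_{pt} = 0` for all `p > 0`, `y ∈ ℝ`, `t > 0`. -/
theorem stmt16 (c : ℝ) (A : ℝ × ℝ → ℝ)
    (hA : ContDiffOn ℝ 2 A (Set.Ioi (0 : ℝ) ×ˢ Set.Ioi (0 : ℝ)))
    (heq : ∀ p > (0 : ℝ), ∀ t > (0 : ℝ),
      t * p * p1 (p1 A) (p, t) - 2 * t ^ 2 * p2 (p1 A) (p, t) + 2 * c ^ 2 = 0) :
    let G : ℝ × ℝ × ℝ → ℝ := fun r =>
      A (r.1, r.2.2) + r.1 * (-(r.2.1 ^ 2) / (4 * r.2.2) + c * r.2.1 / r.2.2)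
    ∀ p > (0 : ℝ), ∀ y : ℝ, ∀ t > (0 : ℝ),
      (px (py G) (p, y, t)) ^ 2 - py (py G) (p, y, t) * px (px G) (p, y, t)
        - pt (px G) (p, y, t) = 0 := by
  intro G p hp y t ht
  have hA' := hA.differentiableOn two_ne_zero
  rw [show G = classCSolution c A from rfl, classCSolution.px_py_eq hA' hp ht,
    classCSolution.py_py_eq hA' hp ht, classCSolution.px_px_eq hA hp ht,
    classCSolution.pt_px_eq hA hp ht]
  field_simp
  linear_combination 8 * heq p hp t ht
end

section
/- Let u, w be C² functions of (x,y,t) on an open set U ⊆ ℝ³. Define the 1-forms e¹ = dx − u dy + w dt, e² = dy − u dt, e³ = dt, the 1-form ω = u_x dy + (u·u_x + 2u_y) dt, the function V = u_x/2, and let ∗ be the pointwise linear operator on 1-forms determined by ∗e¹ = e¹∧e², ∗e² = 2 e¹∧e³, ∗e³ = e²∧e³. Then the three 2-form equations de^i = (1/2) ω ∧ e^i − V·∗e^i (i = 1,2,3) hold on U if and only if (u,w) satisfies the hyper-CR system u_t + w_y + u w_x − w u_x = 0 and u_y + w_x = 0 on U. -/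
/-- A 1-form `a dx + b dy + c dt` on ℝ³, given by its coefficient triple `(a, b, c)`;
the same triple type also encodes a 2-form `a dx∧dy + b dx∧dt + c dy∧dt`. -/
abbrev Form : Type := ((ℝ × ℝ × ℝ) → ℝ) × ((ℝ × ℝ × ℝ) → ℝ) × ((ℝ × ℝ × ℝ) → ℝ)

/-- Exterior derivative of the 1-form `a dx + b dy + c dt`, as the 2-form with
components `(∂ₓb - a_y, ∂ₓc - a_t, b_t ...)` i.e.
`d(a dx + b dy + c dt) = (bₓ - a_y) dx∧dy + (cₓ - a_t) dx∧dt + (c_y - b_t) dy∧dt`. -/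
noncomputable def extd (α : Form) : Form :=
  (fun q => px α.2.1 q - py α.1 q,
   fun q => px α.2.2 q - pt α.1 q,
   fun q => py α.2.2 q - pt α.2.1 q)

/-- Wedge product of two 1-forms, as a 2-form in the basis `dx∧dy, dx∧dt, dy∧dt`. -/
def wedge (α β : Form) : Form :=
  (fun q => α.1 q * β.2.1 q - α.2.1 q * β.1 q,
   fun q => α.1 q * β.2.2 q - α.2.2 q * β.1 q,
   fun q => α.2.1 q * β.2.2 q - α.2.2 q * β.2.1 q)

/-- Multiplication of a form by a function, componentwise. -/
def fsmul (f : (ℝ × ℝ × ℝ) → ℝ) (α : Form) : Form :=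
  (fun q => f q * α.1 q, fun q => f q * α.2.1 q, fun q => f q * α.2.2 q)

/-- Difference of two forms, componentwise. -/
def fsub (α β : Form) : Form :=
  (fun q => α.1 q - β.1 q, fun q => α.2.1 q - β.2.1 q, fun q => α.2.2 q - β.2.2 q)

/-- Equality of two forms at every point of `U`, componentwise. -/
def Eq2On (U : Set (ℝ × ℝ × ℝ)) (α β : Form) : Prop :=
  ∀ q ∈ U, α.1 q = β.1 q ∧ α.2.1 q = β.2.1 q ∧ α.2.2 q = β.2.2 q

lemma pd_const (v : ℝ × ℝ × ℝ) (c : ℝ) : pd v (fun _ => c) = fun _ => 0 := by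
  funext q; simp [pd]

lemma pd_neg (v : ℝ × ℝ × ℝ) (f : ℝ × ℝ × ℝ → ℝ) :
    pd v (fun p => -f p) = fun q => -pd v f q := by
  funext q; simp [pd, fderiv_neg]

/-- For `u, w` C² on an open set `U ⊆ ℝ³`, with `e¹ = dx - u dy + w dt`,
`e² = dy - u dt`, `e³ = dt`, `ω = uₓ dy + (u uₓ + 2 u_y) dt`, `V = uₓ/2`, and the
star operator determined by `∗e¹ = e¹∧e²`, `∗e² = 2 e¹∧e³`, `∗e³ = e²∧e³`, the
Gauduchon–Tod system `deⁱ = ½ ω∧eⁱ - V ∗eⁱ` (i = 1,2,3) holds on `U` iff `(u,w)`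
satisfies the hyper-CR system `u_t + w_y + u wₓ - w uₓ = 0`, `u_y + wₓ = 0` on `U`. -/
theorem stmt19 (U : Set (ℝ × ℝ × ℝ)) (hU : IsOpen U)
    (u w : (ℝ × ℝ × ℝ) → ℝ) (hu : ContDiffOn ℝ 2 u U) (hw : ContDiffOn ℝ 2 w U) :
    let e1 : Form := (fun _ => 1, fun q => -u q, w)
    let e2 : Form := (fun _ => 0, fun _ => 1, fun q => -u q)
    let e3 : Form := (fun _ => 0, fun _ => 0, fun _ => 1)
    let om : Form := (fun _ => 0, fun q => px u q, fun q => u q * px u q + 2 * py u q)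
    let V : (ℝ × ℝ × ℝ) → ℝ := fun q => px u q / 2
    (Eq2On U (extd e1)
        (fsub (fsmul (fun _ => 1 / 2) (wedge om e1)) (fsmul V (wedge e1 e2))) ∧
     Eq2On U (extd e2)
        (fsub (fsmul (fun _ => 1 / 2) (wedge om e2))
          (fsmul V (fsmul (fun _ => 2) (wedge e1 e3)))) ∧
     Eq2On U (extd e3)
        (fsub (fsmul (fun _ => 1 / 2) (wedge om e3)) (fsmul V (wedge e2 e3))))
    ↔ (∀ q ∈ U,
        pt u q + py w q + u q * px w q - w q * px u q = 0 ∧ py u q + px w q = 0) := by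
  intro e1 e2 e3 om V
  simp only [e1, e2, e3, om, V, Eq2On, extd, wedge, fsmul, fsub, px, py, pt,
    pd_const, pd_neg]
  constructor
  · rintro ⟨h1, h2, h3⟩ q hq
    obtain ⟨hA, hB, hC⟩ := h1 q hq
    constructor
    · linear_combination hC + u q * hB
    · linear_combination hB
  · intro h
    refine ⟨fun q hq => ?_, fun q hq => ?_, fun q hq => ?_⟩
    · obtain ⟨h1, h2⟩ := h q hq
      refine ⟨by ring, by linear_combination h2, by linear_combination h1 - u q * h2⟩
    · refine ⟨by ring, by ring, by ring⟩
    · refine ⟨by ring, by ring, by ring⟩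
end
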